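/- For graphs without node attributes and the graph GOSPA pseudometric d̃^{(c,ε)} computed by minimizing over the binary assignment matrices 𝒲_{X,Y}, the function ρ̃^{(c,ε)}([X],[Y]) := d̃^{(c,ε)}(X,Y) on the quotient of the space of graphs by graph isomorphism is well defined (independent of the choice of representatives X ∈ [X] and Y ∈ [Y]) and is a metric on this quotient space: it satisfies identity, symmetry and the triangle inequality, where ρ̃^{(c,ε)}([X],[Y]) = 0 iff [X] = [Y]. -/

import Mathlib

open scoped BigOperators Matrix

namespace GraphGOSPA

/-- An undirected unweighted graph without node attributes: a number of nodes
together with a symmetric `{0,1}`-valued adjacency matrix with zero diagonal. -/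
structure GraphNA where
  n : ℕ
  A : Matrix (Fin n) (Fin n) ℝ
  A_symm : A.IsSymm
  A_01 : ∀ i j, A i j = 0 ∨ A i j = 1
  A_diag : ∀ i, A i i = 0

/-- Componentwise 1-norm of a matrix. -/
def onorm {m n : ℕ} (M : Matrix (Fin m) (Fin n) ℝ) : ℝ :=
  ∑ i, ∑ j, |M i j|

/-- The top-left `m × n` block of an `(m+1) × (n+1)` matrix. -/
def topLeft {m n : ℕ} (W : Matrix (Fin (m+1)) (Fin (n+1)) ℝ) :
    Matrix (Fin m) (Fin n) ℝ :=
  fun i j => W i.castSucc j.castSucc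

/-- The set `𝒲_{X,Y}` of binary assignment matrices: entries in `{0,1}`,
each of the first `nY` columns sums to 1, each of the first `nX` rows sums to 1,
and the bottom-right corner is 0. -/
def Wset (nX nY : ℕ) : Set (Matrix (Fin (nX+1)) (Fin (nY+1)) ℝ) :=
  {W | (∀ i j, W i j = 0 ∨ W i j = 1) ∧
    (∀ j : Fin nY, ∑ i, W i j.castSucc = 1) ∧
    (∀ i : Fin nX, ∑ j, W i.castSucc j = 1) ∧
    W (Fin.last nX) (Fin.last nY) = 0}

/-- The relaxed set `𝒲̄_{X,Y}`: nonnegative entries, with the same row/column sum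
constraints and zero bottom-right corner. -/
def WbarSet (nX nY : ℕ) : Set (Matrix (Fin (nX+1)) (Fin (nY+1)) ℝ) :=
  {W | (∀ i j, 0 ≤ W i j) ∧
    (∀ j : Fin nY, ∑ i, W i j.castSucc = 1) ∧
    (∀ i : Fin nX, ∑ j, W i.castSucc j = 1) ∧
    W (Fin.last nX) (Fin.last nY) = 0}

/-- The edge mismatch cost `e_{X,Y}(W)^p = (ε^p/2)‖A_X W' − W' A_Y‖`. -/
noncomputable def edgeCost (p ε : ℝ) (X Y : GraphNA)
    (W : Matrix (Fin (X.n+1)) (Fin (Y.n+1)) ℝ) : ℝ :=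
  ε ^ p / 2 * onorm (X.A * topLeft W - topLeft W * Y.A)

/-- The unassignment cost `(c^p/2)(Σ_i W(i, n_Y+1) + Σ_j W(n_X+1, j))`. -/
noncomputable def missFalseCost (p c : ℝ) (X Y : GraphNA)
    (W : Matrix (Fin (X.n+1)) (Fin (Y.n+1)) ℝ) : ℝ :=
  c ^ p / 2 * ((∑ i : Fin X.n, W i.castSucc (Fin.last Y.n)) +
    (∑ j : Fin Y.n, W (Fin.last X.n) j.castSucc))

/-- The graph GOSPA pseudometric `d̃^{(c,ε)}` for graphs without node attributes,
computed by minimizing over the binary assignment matrices `𝒲_{X,Y}`. -/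
noncomputable def dtilde (p c ε : ℝ) (X Y : GraphNA) : ℝ :=
  sInf {v | ∃ W ∈ Wset X.n Y.n,
    v = missFalseCost p c X Y W + edgeCost p ε X Y W} ^ (1 / p)

/-- A permutation matrix: a `{0,1}`-valued square matrix whose rows and columns
each sum to 1. -/
def IsPermMatrix {n : ℕ} (P : Matrix (Fin n) (Fin n) ℝ) : Prop :=
  (∀ i j, P i j = 0 ∨ P i j = 1) ∧
    (∀ i, ∑ j, P i j = 1) ∧ (∀ j, ∑ i, P i j = 1)

/-- Two graphs without node attributes are isomorphic if they have the same number of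
nodes and there is a permutation matrix `P` with `A_X P = P A_Y`. -/
def Isomorphic (X Y : GraphNA) : Prop :=
  ∃ h : X.n = Y.n, ∃ P : Matrix (Fin X.n) (Fin X.n) ℝ, IsPermMatrix P ∧
    X.A * P = P * (Y.A.submatrix (Fin.cast h) (Fin.cast h))

/-!
A matrix `W ∈ Wset` is determined by its top-left block `F`, a partial matching between the
nodes of `X` and `Y`, and its cost is `(c^p/2)(n_X + n_Y - 2 ΣF) + (ε^p/2)‖A_X F - F A_Y‖`.
Transposing `F` gives symmetry. Composing `F : X → Z` with `G : Z → Y` gives a partial matching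
whose cost is at most the sum of theirs: `ΣF + ΣG ≤ n_Z + Σ FG`, and
`A_X FG - FG A_Y = (A_X F - F A_Z) G + F (A_Z G - G A_Y)` where multiplication by a partial
matching does not increase the 1-norm. This is the triangle inequality for `d̃^p`, and
subadditivity of `t ↦ t^(1/p)` transfers it to `d̃`. Cost `0` forces `F` to be a permutation
matrix intertwining the adjacency matrices, i.e. an isomorphism; invariance under isomorphism
then follows from the triangle inequality.
-/

section Onorm

variable {m n k : ℕ}

lemma onorm_nonneg (M : Matrix (Fin m) (Fin n) ℝ) : 0 ≤ onorm M :=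
  Finset.sum_nonneg fun _ _ => Finset.sum_nonneg fun _ _ => abs_nonneg _

lemma onorm_eq_zero_iff {M : Matrix (Fin m) (Fin n) ℝ} : onorm M = 0 ↔ M = 0 := by
  simp [onorm, Finset.sum_eq_zero_iff_of_nonneg, Finset.sum_nonneg, ← Matrix.ext_iff]

lemma onorm_add_le (M N : Matrix (Fin m) (Fin n) ℝ) : onorm (M + N) ≤ onorm M + onorm N := by
  simp only [onorm, ← Finset.sum_add_distrib]
  exact Finset.sum_le_sum fun i _ => Finset.sum_le_sum fun j _ => abs_add_le _ _

lemma onorm_neg (M : Matrix (Fin m) (Fin n) ℝ) : onorm (-M) = onorm M := by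
  simp [onorm]

lemma onorm_transpose (M : Matrix (Fin m) (Fin n) ℝ) : onorm Mᵀ = onorm M :=
  Finset.sum_comm

lemma onorm_mul_le_of_rowSum_le (M : Matrix (Fin m) (Fin k) ℝ) {N : Matrix (Fin k) (Fin n) ℝ}
    (hN : ∀ i j, 0 ≤ N i j) (hrow : ∀ i, ∑ j, N i j ≤ 1) : onorm (M * N) ≤ onorm M := by
  refine Finset.sum_le_sum fun i _ => ?_
  calc ∑ j, |(M * N) i j| ≤ ∑ j, ∑ l, |M i l| * N l j := by
        refine Finset.sum_le_sum fun j _ => ?_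
        rw [Matrix.mul_apply]
        refine (Finset.abs_sum_le_sum_abs _ _).trans_eq ?_
        simp only [abs_mul, abs_of_nonneg (hN _ j)]
    _ = ∑ l, |M i l| * ∑ j, N l j := by
        rw [Finset.sum_comm]
        simp only [Finset.mul_sum]
    _ ≤ ∑ l, |M i l| := Finset.sum_le_sum fun l _ =>
        mul_le_of_le_one_right (abs_nonneg _) (hrow l)

lemma onorm_mul_le_of_colSum_le {N : Matrix (Fin m) (Fin k) ℝ} (M : Matrix (Fin k) (Fin n) ℝ)
    (hN : ∀ i j, 0 ≤ N i j) (hcol : ∀ j, ∑ i, N i j ≤ 1) : onorm (N * M) ≤ onorm M := by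
  simpa only [← Matrix.transpose_mul, onorm_transpose] using
    onorm_mul_le_of_rowSum_le Mᵀ (N := Nᵀ) (fun i j => hN j i) hcol

lemma onorm_mul_sub_mul_le (A : Matrix (Fin m) (Fin m) ℝ) (B : Matrix (Fin k) (Fin k) ℝ)
    (C : Matrix (Fin n) (Fin n) ℝ) {F : Matrix (Fin m) (Fin k) ℝ} {G : Matrix (Fin k) (Fin n) ℝ}
    (hF : ∀ i j, 0 ≤ F i j) (hFcol : ∀ j, ∑ i, F i j ≤ 1)
    (hG : ∀ i j, 0 ≤ G i j) (hGrow : ∀ i, ∑ j, G i j ≤ 1) :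
    onorm (A * (F * G) - F * G * C) ≤ onorm (A * F - F * B) + onorm (B * G - G * C) := by
  have hsplit : A * (F * G) - F * G * C = (A * F - F * B) * G + F * (B * G - G * C) := by
    simp only [Matrix.sub_mul, Matrix.mul_sub, Matrix.mul_assoc]
    abel
  rw [hsplit]
  exact (onorm_add_le _ _).trans (add_le_add (onorm_mul_le_of_rowSum_le _ hG hGrow)
    (onorm_mul_le_of_colSum_le _ hF hFcol))

end Onorm

lemma sum_eq_zero_or_one {ι : Type*} (s : Finset ι) {f : ι → ℝ}
    (hf : ∀ i ∈ s, f i = 0 ∨ f i = 1) (hle : ∑ i ∈ s, f i ≤ 1) :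
    ∑ i ∈ s, f i = 0 ∨ ∑ i ∈ s, f i = 1 := by
  classical
  -- the sum counts the indices with `f i = 1`, a natural number
  have hcast : ∑ i ∈ s, f i = ((∑ i ∈ s, if f i = 1 then 1 else 0 : ℕ) : ℝ) := by
    push_cast
    exact Finset.sum_congr rfl fun i hi => by rcases hf i hi with h | h <;> simp [h]
  rw [hcast] at hle ⊢
  generalize (∑ i ∈ s, if f i = 1 then 1 else 0 : ℕ) = N at hle ⊢
  have hN : N ≤ 1 := by exact_mod_cast hle
  interval_cases N <;> simp

section PartialMatching

variable {m n k : ℕ}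

def entrySum (F : Matrix (Fin m) (Fin n) ℝ) : ℝ :=
  ∑ i, ∑ j, F i j

lemma entrySum_transpose (F : Matrix (Fin m) (Fin n) ℝ) : entrySum Fᵀ = entrySum F :=
  Finset.sum_comm

lemma entrySum_mul (F : Matrix (Fin m) (Fin k) ℝ) (G : Matrix (Fin k) (Fin n) ℝ) :
    entrySum (F * G) = ∑ l, (∑ i, F i l) * ∑ j, G l j := by
  simp only [entrySum, Matrix.mul_apply, Finset.sum_mul_sum]
  exact (Finset.sum_congr rfl fun _ _ => Finset.sum_comm).trans Finset.sum_comm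

/-- For partial matchings this is inclusion–exclusion over the nodes of the middle graph. -/
lemma entrySum_add_entrySum_le {F : Matrix (Fin m) (Fin k) ℝ} {G : Matrix (Fin k) (Fin n) ℝ}
    (hF : ∀ l, ∑ i, F i l ≤ 1) (hG : ∀ l, ∑ j, G l j ≤ 1) :
    entrySum F + entrySum G ≤ k + entrySum (F * G) := by
  have hpoint : ∀ l, (∑ i, F i l) + ∑ j, G l j ≤ 1 + (∑ i, F i l) * ∑ j, G l j := fun l => by
    nlinarith [mul_nonneg (sub_nonneg.2 (hF l)) (sub_nonneg.2 (hG l))]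
  calc entrySum F + entrySum G = ∑ l, ((∑ i, F i l) + ∑ j, G l j) := by
        rw [Finset.sum_add_distrib, ← entrySum_transpose]; rfl
    _ ≤ ∑ l, (1 + (∑ i, F i l) * ∑ j, G l j) := Finset.sum_le_sum fun l _ => hpoint l
    _ = k + entrySum (F * G) := by simp [Finset.sum_add_distrib, entrySum_mul]

lemma sum_mul_apply_le_one {F : Matrix (Fin m) (Fin k) ℝ} {G : Matrix (Fin k) (Fin n) ℝ}
    (hF : ∀ i l, 0 ≤ F i l) (hFrow : ∀ i, ∑ l, F i l ≤ 1) (hGrow : ∀ l, ∑ j, G l j ≤ 1)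
    (i : Fin m) : ∑ j, (F * G) i j ≤ 1 := by
  calc ∑ j, (F * G) i j = ∑ l, F i l * ∑ j, G l j := by
        simp only [Matrix.mul_apply, Finset.mul_sum]
        exact Finset.sum_comm
    _ ≤ ∑ l, F i l := Finset.sum_le_sum fun l _ => mul_le_of_le_one_right (hF i l) (hGrow l)
    _ ≤ 1 := hFrow i

structure IsPartialMatching (F : Matrix (Fin m) (Fin n) ℝ) : Prop where
  zero_or_one : ∀ i j, F i j = 0 ∨ F i j = 1
  rowSum_le : ∀ i, ∑ j, F i j ≤ 1
  colSum_le : ∀ j, ∑ i, F i j ≤ 1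

lemma isPartialMatching_zero : IsPartialMatching (0 : Matrix (Fin m) (Fin n) ℝ) :=
  ⟨fun _ _ => Or.inl rfl, fun _ => by simp, fun _ => by simp⟩

namespace IsPartialMatching

variable {F : Matrix (Fin m) (Fin n) ℝ}

lemma nonneg (hF : IsPartialMatching F) (i : Fin m) (j : Fin n) : 0 ≤ F i j := by
  rcases hF.zero_or_one i j with h | h <;> simp [h]

lemma le_one (hF : IsPartialMatching F) (i : Fin m) (j : Fin n) : F i j ≤ 1 := by
  rcases hF.zero_or_one i j with h | h <;> simp [h]

lemma transpose (hF : IsPartialMatching F) : IsPartialMatching Fᵀ :=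
  ⟨fun i j => hF.zero_or_one j i, hF.colSum_le, hF.rowSum_le⟩

lemma entrySum_le_left (hF : IsPartialMatching F) : entrySum F ≤ m :=
  calc entrySum F ≤ ∑ _i : Fin m, (1 : ℝ) := Finset.sum_le_sum fun i _ => hF.rowSum_le i
    _ = m := by simp

lemma entrySum_le_right (hF : IsPartialMatching F) : entrySum F ≤ n := by
  simpa only [entrySum_transpose] using hF.transpose.entrySum_le_left

lemma rowSum_eq_one (hF : IsPartialMatching F) (h : entrySum F = m) (i : Fin m) :
    ∑ j, F i j = 1 :=
  (Finset.sum_eq_sum_iff_of_le fun i _ => hF.rowSum_le i).1 (by simpa [entrySum] using h) i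
    (Finset.mem_univ i)

lemma colSum_eq_one (hF : IsPartialMatching F) (h : entrySum F = n) (j : Fin n) :
    ∑ i, F i j = 1 :=
  hF.transpose.rowSum_eq_one (by rwa [entrySum_transpose]) j

lemma mul {G : Matrix (Fin n) (Fin k) ℝ} (hF : IsPartialMatching F) (hG : IsPartialMatching G) :
    IsPartialMatching (F * G) where
  zero_or_one i j := by
    rw [Matrix.mul_apply]
    refine sum_eq_zero_or_one _ (fun l _ => ?_) ?_
    · rcases hF.zero_or_one i l with h | h <;> rcases hG.zero_or_one l j with h' | h' <;>
        simp [h, h']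
    · calc ∑ l, F i l * G l j ≤ ∑ l, F i l := Finset.sum_le_sum fun l _ =>
            mul_le_of_le_one_right (hF.nonneg i l) (hG.le_one l j)
        _ ≤ 1 := hF.rowSum_le i
  rowSum_le := sum_mul_apply_le_one hF.nonneg hF.rowSum_le hG.rowSum_le
  colSum_le j := by
    have := sum_mul_apply_le_one (F := Gᵀ) (G := Fᵀ) hG.transpose.nonneg hG.colSum_le
      hF.colSum_le j
    rwa [← Matrix.transpose_mul] at this

end IsPartialMatching

end PartialMatching

section Slack

variable {m n : ℕ}

/-- The assignment matrix with top-left block `F`: the last column and row record the nodes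
that `F` leaves unmatched. -/
def withSlack (F : Matrix (Fin m) (Fin n) ℝ) : Matrix (Fin (m + 1)) (Fin (n + 1)) ℝ :=
  Fin.snoc (fun i => Fin.snoc (F i) (1 - ∑ j, F i j)) (Fin.snoc (fun j => 1 - ∑ i, F i j) 0)

@[simp]
lemma topLeft_withSlack (F : Matrix (Fin m) (Fin n) ℝ) : topLeft (withSlack F) = F := by
  ext i j
  simp [topLeft, withSlack]

lemma withSlack_topLeft {W : Matrix (Fin (m + 1)) (Fin (n + 1)) ℝ} (hW : W ∈ Wset m n) :
    withSlack (topLeft W) = W := by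
  obtain ⟨-, hcol, hrow, hcorner⟩ := hW
  ext i j
  induction i using Fin.lastCases with
  | last =>
    induction j using Fin.lastCases with
    | last => simp [withSlack, hcorner]
    | cast j =>
      have := hcol j
      rw [Fin.sum_univ_castSucc] at this
      simp only [withSlack, topLeft, Fin.snoc_last, Fin.snoc_castSucc]
      linarith
  | cast i =>
    induction j using Fin.lastCases with
    | last =>
      have := hrow i
      rw [Fin.sum_univ_castSucc] at this
      simp only [withSlack, topLeft, Fin.snoc_last, Fin.snoc_castSucc]
      linarith
    | cast j => simp [withSlack, topLeft]

lemma IsPartialMatching.withSlack_mem_Wset {F : Matrix (Fin m) (Fin n) ℝ}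
    (hF : IsPartialMatching F) : withSlack F ∈ Wset m n := by
  have hslack : ∀ s : ℝ, s = 0 ∨ s = 1 → 1 - s = 0 ∨ 1 - s = 1 := by
    rintro s (rfl | rfl) <;> norm_num
  refine ⟨fun i j => ?_, fun j => ?_, fun i => ?_, by simp [withSlack]⟩
  · induction i using Fin.lastCases with
    | last =>
      induction j using Fin.lastCases with
      | last => simp [withSlack]
      | cast j =>
        simpa [withSlack] using hslack _ (sum_eq_zero_or_one _
          (fun i _ => hF.zero_or_one i j) (hF.colSum_le j))
    | cast i =>
      induction j using Fin.lastCases with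
      | last =>
        simpa [withSlack] using hslack _ (sum_eq_zero_or_one _
          (fun j _ => hF.zero_or_one i j) (hF.rowSum_le i))
      | cast j => simpa [withSlack] using hF.zero_or_one i j
  · simp [withSlack, Fin.sum_univ_castSucc]
  · simp [withSlack, Fin.sum_univ_castSucc]

lemma isPartialMatching_topLeft {W : Matrix (Fin (m + 1)) (Fin (n + 1)) ℝ}
    (hW : W ∈ Wset m n) : IsPartialMatching (topLeft W) := by
  obtain ⟨h01, hcol, hrow, -⟩ := hW
  have hnonneg : ∀ i j, 0 ≤ W i j := fun i j => by rcases h01 i j with h | h <;> simp [h]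
  refine ⟨fun i j => h01 _ _, fun i => ?_, fun j => ?_⟩ <;> unfold topLeft
  · have := hrow i
    rw [Fin.sum_univ_castSucc] at this
    linarith [hnonneg i.castSucc (Fin.last n)]
  · have := hcol j
    rw [Fin.sum_univ_castSucc] at this
    linarith [hnonneg (Fin.last m) j.castSucc]

lemma Wset_finite (m n : ℕ) : (Wset m n).Finite :=
  (Set.Finite.pi fun _ => Set.Finite.pi fun _ => Set.toFinite ({0, 1} : Set ℝ)).subset
    fun W hW => by simpa [Set.mem_pi] using hW.1

end Slack

section Cost

variable (p c ε : ℝ)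

/-- `X.n + Y.n - 2 * entrySum F` is the number of nodes left unmatched by `F`. -/
noncomputable def matchingCost (X Y : GraphNA) (F : Matrix (Fin X.n) (Fin Y.n) ℝ) : ℝ :=
  c ^ p / 2 * (X.n + Y.n - 2 * entrySum F) + ε ^ p / 2 * onorm (X.A * F - F * Y.A)

noncomputable def assignmentCosts (X Y : GraphNA) : Set ℝ :=
  {v | ∃ W ∈ Wset X.n Y.n, v = missFalseCost p c X Y W + edgeCost p ε X Y W}

noncomputable def gospaCost (X Y : GraphNA) : ℝ :=
  sInf (assignmentCosts p c ε X Y)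

lemma dtilde_eq_gospaCost_rpow (X Y : GraphNA) :
    dtilde p c ε X Y = gospaCost p c ε X Y ^ (1 / p) :=
  rfl

variable {X Y Z : GraphNA}

lemma missFalseCost_add_edgeCost_withSlack (F : Matrix (Fin X.n) (Fin Y.n) ℝ) :
    missFalseCost p c X Y (withSlack F) + edgeCost p ε X Y (withSlack F) =
      matchingCost p c ε X Y F := by
  have hcols : ∑ j, ∑ i, F i j = ∑ i, ∑ j, F i j := Finset.sum_comm
  rw [missFalseCost, edgeCost, topLeft_withSlack, matchingCost, entrySum]
  simp only [withSlack, Fin.snoc_castSucc, Fin.snoc_last, Finset.sum_sub_distrib, hcols,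
    Finset.sum_const, Finset.card_univ, Fintype.card_fin, nsmul_eq_mul, mul_one]
  ring

lemma assignmentCosts_finite (X Y : GraphNA) : (assignmentCosts p c ε X Y).Finite :=
  ((Wset_finite X.n Y.n).image fun W => missFalseCost p c X Y W + edgeCost p ε X Y W).subset
    fun _ ⟨W, hW, hv⟩ => ⟨W, hW, hv.symm⟩

lemma exists_matchingCost_eq_gospaCost (X Y : GraphNA) :
    ∃ F, IsPartialMatching F ∧ matchingCost p c ε X Y F = gospaCost p c ε X Y := by
  have hne : (assignmentCosts p c ε X Y).Nonempty :=
    ⟨_, withSlack 0, isPartialMatching_zero.withSlack_mem_Wset, rfl⟩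
  obtain ⟨W, hW, hmin⟩ := hne.csInf_mem (assignmentCosts_finite p c ε X Y)
  refine ⟨topLeft W, isPartialMatching_topLeft hW, ?_⟩
  rw [← missFalseCost_add_edgeCost_withSlack, withSlack_topLeft hW]
  exact hmin.symm

variable {p c ε}

lemma gospaCost_le_matchingCost {F : Matrix (Fin X.n) (Fin Y.n) ℝ} (hF : IsPartialMatching F) :
    gospaCost p c ε X Y ≤ matchingCost p c ε X Y F :=
  csInf_le (assignmentCosts_finite p c ε X Y).bddBelow
    ⟨withSlack F, hF.withSlack_mem_Wset, (missFalseCost_add_edgeCost_withSlack p c ε F).symm⟩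

lemma matchingCost_transpose (F : Matrix (Fin X.n) (Fin Y.n) ℝ) :
    matchingCost p c ε Y X Fᵀ = matchingCost p c ε X Y F := by
  have hcomm : Y.A * Fᵀ - Fᵀ * X.A = -(X.A * F - F * Y.A)ᵀ := by
    rw [Matrix.transpose_sub, Matrix.transpose_mul, Matrix.transpose_mul, X.A_symm, Y.A_symm,
      neg_sub]
  rw [matchingCost, matchingCost, hcomm, onorm_neg, onorm_transpose, entrySum_transpose,
    add_comm (Y.n : ℝ)]

lemma gospaCost_comm (X Y : GraphNA) : gospaCost p c ε X Y = gospaCost p c ε Y X := by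
  have hle : ∀ X Y : GraphNA, gospaCost p c ε Y X ≤ gospaCost p c ε X Y := fun X Y => by
    obtain ⟨F, hF, hmin⟩ := exists_matchingCost_eq_gospaCost p c ε X Y
    rw [← hmin, ← matchingCost_transpose]
    exact gospaCost_le_matchingCost hF.transpose
  exact le_antisymm (hle Y X) (hle X Y)

section Nonneg

variable (hc : 0 ≤ c) (hε : 0 ≤ ε)
include hc hε

lemma matchingCost_nonneg {F : Matrix (Fin X.n) (Fin Y.n) ℝ} (hF : IsPartialMatching F) :
    0 ≤ matchingCost p c ε X Y F := by
  have hmiss : 0 ≤ (X.n : ℝ) + Y.n - 2 * entrySum F := by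
    linarith [hF.entrySum_le_left, hF.entrySum_le_right]
  exact add_nonneg (mul_nonneg (div_nonneg (Real.rpow_nonneg hc p) zero_le_two) hmiss)
    (mul_nonneg (div_nonneg (Real.rpow_nonneg hε p) zero_le_two) (onorm_nonneg _))

lemma gospaCost_nonneg (X Y : GraphNA) : 0 ≤ gospaCost p c ε X Y := by
  obtain ⟨F, hF, hmin⟩ := exists_matchingCost_eq_gospaCost p c ε X Y
  exact hmin ▸ matchingCost_nonneg hc hε hF

lemma matchingCost_mul_le {F : Matrix (Fin X.n) (Fin Z.n) ℝ} {G : Matrix (Fin Z.n) (Fin Y.n) ℝ}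
    (hF : IsPartialMatching F) (hG : IsPartialMatching G) :
    matchingCost p c ε X Y (F * G) ≤ matchingCost p c ε X Z F + matchingCost p c ε Z Y G := by
  have hmiss := entrySum_add_entrySum_le hF.colSum_le hG.rowSum_le
  have hedge := onorm_mul_sub_mul_le X.A Z.A Y.A hF.nonneg hF.colSum_le hG.nonneg hG.rowSum_le
  unfold matchingCost
  linarith [mul_le_mul_of_nonneg_left hmiss (Real.rpow_nonneg hc p),
    mul_le_mul_of_nonneg_left hedge (Real.rpow_nonneg hε p)]

lemma gospaCost_triangle (X Y Z : GraphNA) :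
    gospaCost p c ε X Y ≤ gospaCost p c ε X Z + gospaCost p c ε Z Y := by
  obtain ⟨F, hF, hFmin⟩ := exists_matchingCost_eq_gospaCost p c ε X Z
  obtain ⟨G, hG, hGmin⟩ := exists_matchingCost_eq_gospaCost p c ε Z Y
  rw [← hFmin, ← hGmin]
  exact (gospaCost_le_matchingCost (hF.mul hG)).trans (matchingCost_mul_le hc hε hF hG)

end Nonneg

lemma isomorphic_iff_exists_intertwiner : Isomorphic X Y ↔
    ∃ F : Matrix (Fin X.n) (Fin Y.n) ℝ, (∀ i j, F i j = 0 ∨ F i j = 1) ∧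
      (∀ i, ∑ j, F i j = 1) ∧ (∀ j, ∑ i, F i j = 1) ∧ X.A * F = F * Y.A := by
  obtain ⟨n, A, -, -, -⟩ := X
  obtain ⟨m, B, -, -, -⟩ := Y
  dsimp only [Isomorphic]
  constructor
  · rintro ⟨h, P, ⟨h01, hrow, hcol⟩, hAP⟩
    subst h
    exact ⟨P, h01, hrow, hcol, by simpa using hAP⟩
  · rintro ⟨F, h01, hrow, hcol, hAF⟩
    obtain rfl : n = m := by
      have : (n : ℝ) = m :=
        calc (n : ℝ) = ∑ i, ∑ j, F i j := by simp [hrow]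
          _ = ∑ j, ∑ i, F i j := Finset.sum_comm
          _ = m := by simp [hcol]
      exact_mod_cast this
    exact ⟨rfl, F, ⟨h01, hrow, hcol⟩, by simpa using hAF⟩

section Pos

variable (hc : 0 < c) (hε : 0 < ε)
include hc hε

lemma matchingCost_eq_zero_iff {F : Matrix (Fin X.n) (Fin Y.n) ℝ} (hF : IsPartialMatching F) :
    matchingCost p c ε X Y F = 0 ↔
      (∀ i, ∑ j, F i j = 1) ∧ (∀ j, ∑ i, F i j = 1) ∧ X.A * F = F * Y.A := by
  have hleX := hF.entrySum_le_left
  have hleY := hF.entrySum_le_right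
  constructor
  · intro h
    have hmiss : 0 ≤ (X.n : ℝ) + Y.n - 2 * entrySum F := by linarith
    have hedge := onorm_nonneg (X.A * F - F * Y.A)
    obtain ⟨hm, he⟩ := (add_eq_zero_iff_of_nonneg (by positivity) (by positivity)).1 h
    have hm' := (mul_eq_zero.1 hm).resolve_left (by positivity)
    have he' := (mul_eq_zero.1 he).resolve_left (by positivity)
    exact ⟨hF.rowSum_eq_one (by linarith), hF.colSum_eq_one (by linarith),
      sub_eq_zero.1 (onorm_eq_zero_iff.1 he')⟩
  · rintro ⟨hrow, hcol, hAF⟩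
    have hX : entrySum F = X.n := by simp [entrySum, hrow]
    have hY : entrySum F = Y.n := by
      rw [← entrySum_transpose]
      simp [entrySum, hcol]
    have hmiss : (X.n : ℝ) + Y.n - 2 * entrySum F = 0 := by linarith
    rw [matchingCost, hmiss, hAF, sub_self, onorm_eq_zero_iff.2 rfl]
    ring

lemma gospaCost_eq_zero_iff : gospaCost p c ε X Y = 0 ↔ Isomorphic X Y := by
  rw [isomorphic_iff_exists_intertwiner]
  constructor
  · intro h
    obtain ⟨F, hF, hmin⟩ := exists_matchingCost_eq_gospaCost p c ε X Y
    obtain ⟨hrow, hcol, hAF⟩ := (matchingCost_eq_zero_iff hc hε hF).1 (hmin.trans h)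
    exact ⟨F, hF.zero_or_one, hrow, hcol, hAF⟩
  · rintro ⟨F, h01, hrow, hcol, hAF⟩
    have hF : IsPartialMatching F := ⟨h01, fun i => (hrow i).le, fun j => (hcol j).le⟩
    refine le_antisymm ?_ (gospaCost_nonneg hc.le hε.le X Y)
    exact (gospaCost_le_matchingCost hF).trans_eq
      ((matchingCost_eq_zero_iff hc hε hF).2 ⟨hrow, hcol, hAF⟩)

lemma gospaCost_congr {X' Y' : GraphNA} (hX : Isomorphic X X') (hY : Isomorphic Y Y') :
    gospaCost p c ε X Y = gospaCost p c ε X' Y' := by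
  have hXX' := (gospaCost_eq_zero_iff (p := p) hc hε).2 hX
  have hYY' := (gospaCost_eq_zero_iff (p := p) hc hε).2 hY
  have htri := gospaCost_triangle (p := p) hc.le hε.le
  have hcomm := gospaCost_comm (p := p) (c := c) (ε := ε)
  linarith [htri X Y X', htri X' Y Y', htri X' Y' X, htri X Y' Y, hcomm X X', hcomm Y Y']

end Pos

end Cost

/-- The function `ρ̃^{(c,ε)}([X],[Y]) := d̃^{(c,ε)}(X,Y)` on the
quotient of the space of graphs (without node attributes) by graph isomorphism is
well defined — independent of the choice of representatives of the isomorphism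
classes — and is a metric on this quotient space: it satisfies identity (it vanishes
precisely on pairs of isomorphic graphs, i.e. precisely when `[X] = [Y]`), symmetry,
and the triangle inequality. -/
theorem dtilde_metric_on_quotient (p c ε : ℝ) (hp : 1 ≤ p) (hc : 0 < c)
    (hε : 0 < ε) :
    (∀ X X' Y Y' : GraphNA, Isomorphic X X' → Isomorphic Y Y' →
      dtilde p c ε X Y = dtilde p c ε X' Y') ∧
    (∀ X Y : GraphNA, dtilde p c ε X Y = 0 ↔ Isomorphic X Y) ∧
    (∀ X Y : GraphNA, dtilde p c ε X Y = dtilde p c ε Y X) ∧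
    (∀ X Y Z : GraphNA,
      dtilde p c ε X Y ≤ dtilde p c ε X Z + dtilde p c ε Z Y) := by
  have hp₀ : 0 < p := zero_lt_one.trans_le hp
  have hnonneg := gospaCost_nonneg (p := p) hc.le hε.le
  simp only [dtilde_eq_gospaCost_rpow]
  refine ⟨fun X X' Y Y' hX hY => ?_, fun X Y => ?_, fun X Y => ?_, fun X Y Z => ?_⟩
  · rw [gospaCost_congr hc hε hX hY]
  · rw [Real.rpow_eq_zero (hnonneg X Y) (one_div_pos.2 hp₀).ne', gospaCost_eq_zero_iff hc hε]
  · rw [gospaCost_comm]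
  · calc gospaCost p c ε X Y ^ (1 / p)
        ≤ (gospaCost p c ε X Z + gospaCost p c ε Z Y) ^ (1 / p) :=
          Real.rpow_le_rpow (hnonneg X Y) (gospaCost_triangle hc.le hε.le X Y Z) (by positivity)
      _ ≤ _ := Real.rpow_add_le_add_rpow (hnonneg X Z) (hnonneg Z Y) (by positivity)
          ((div_le_one hp₀).2 hp)

end GraphGOSPA
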